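/- Let p and n be positive integers with p ≡ 1 (mod 4) and n ≡ 2 (mod 4). In B = ℍ[ℚ, −p, −n], set e₀ = 1, e₁ = i, e₂ = (1 + i + j)/2, e₃ = (−1 − i + k)/2. Then the ℤ-submodule of B spanned by e₀, e₁, e₂, e₃ contains 1, contains j, and is closed under multiplication (so it is a ℤ-order of B), and the determinant of the trace Gram matrix of (e₀, e₁, e₂, e₃) equals −n²·p² (so the order has reduced discriminant n·p). -/

import Mathlib

open Quaternion

/-- The reduced trace of a quaternion. -/
def trd {c₁ c₂ : ℚ} (x : ℍ[ℚ, c₁, c₂]) : ℚ := 2 * x.re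

/-- The trace Gram matrix of a quadruple of quaternions:
its `(r, s)` entry is `trd (e r * e s)`. -/
def traceGram {c₁ c₂ : ℚ} (e : Fin 4 → ℍ[ℚ, c₁, c₂]) : Matrix (Fin 4) (Fin 4) ℚ :=
  Matrix.of fun r s => trd (e r * e s)

/-- The ℤ-submodule spanned by a quadruple of quaternions. -/
def quadSpan {c₁ c₂ : ℚ} (e : Fin 4 → ℍ[ℚ, c₁, c₂]) : Submodule ℤ ℍ[ℚ, c₁, c₂] :=
  Submodule.span ℤ {e 0, e 1, e 2, e 3}


/-! With `p = 4m + 1` and `n = 4l + 2`, each product of two of the four basis elements is an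
integral combination of them (`orderStructConst` is the multiplication table), so their ℤ-span is
a ring. The basis arises from `1, i, j, k` by a triangular change of basis of determinant `1/4`,
and the trace Gram matrix of `1, i, j, k` in `ℍ[ℚ, a, b]` is `diag(2, 2a, 2b, -2ab)`; hence the
Gram determinant is `-(ab)²`. -/

theorem mul_mem_span_of_mul_mem {R A : Type*} [CommSemiring R] [Semiring A] [Algebra R A]
    {s : Set A} (hs : ∀ a ∈ s, ∀ b ∈ s, a * b ∈ Submodule.span R s) {x y : A}
    (hx : x ∈ Submodule.span R s) (hy : y ∈ Submodule.span R s) :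
    x * y ∈ Submodule.span R s := by
  have hle : Submodule.span R s * Submodule.span R s ≤ Submodule.span R s := by
    rw [Submodule.span_mul_span, Submodule.span_le]
    rintro _ ⟨a, ha, b, hb, rfl⟩
    exact hs a ha b hb
  exact hle (Submodule.mul_mem_mul hx hy)

section quadSpan

variable {c₁ c₂ : ℚ}

theorem mem_quadSpan (e : Fin 4 → ℍ[ℚ, c₁, c₂]) (r : Fin 4) : e r ∈ quadSpan e :=
  Submodule.subset_span (by fin_cases r <;> simp)

theorem sum_zsmul_mem_quadSpan (e : Fin 4 → ℍ[ℚ, c₁, c₂]) (z : Fin 4 → ℤ) :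
    ∑ t, z t • e t ∈ quadSpan e :=
  Submodule.sum_mem _ fun t _ => Submodule.smul_mem _ _ (mem_quadSpan e t)

theorem mul_mem_quadSpan {e : Fin 4 → ℍ[ℚ, c₁, c₂]} (he : ∀ r s, e r * e s ∈ quadSpan e)
    {x y : ℍ[ℚ, c₁, c₂]} (hx : x ∈ quadSpan e) (hy : y ∈ quadSpan e) : x * y ∈ quadSpan e :=
  mul_mem_span_of_mul_mem
    (by rintro _ (rfl | rfl | rfl | rfl) _ (rfl | rfl | rfl | rfl) <;> exact he _ _) hx hy

end quadSpan

def orderBasis (c₁ c₂ : ℚ) : Fin 4 → ℍ[ℚ, c₁, c₂] :=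
  ![1, ⟨0, 1, 0, 0⟩, (2 : ℚ)⁻¹ • (1 + ⟨0, 1, 0, 0⟩ + ⟨0, 0, 1, 0⟩),
    (2 : ℚ)⁻¹ • (-1 - ⟨0, 1, 0, 0⟩ + ⟨0, 0, 0, 1⟩)]

theorem imJ_mem_quadSpan_orderBasis (c₁ c₂ : ℚ) :
    (⟨0, 0, 1, 0⟩ : ℍ[ℚ, c₁, c₂]) ∈ quadSpan (orderBasis c₁ c₂) := by
  have hj : (⟨0, 0, 1, 0⟩ : ℍ[ℚ, c₁, c₂]) =
      ∑ t, ![-1, -1, 2, 0] t • orderBasis c₁ c₂ t := by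
    ext <;> simp [orderBasis, Fin.sum_univ_four, ← Int.cast_smul_eq_zsmul ℚ]
  rw [hj]
  exact sum_zsmul_mem_quadSpan _ _

theorem det_traceGram_orderBasis (c₁ c₂ : ℚ) :
    (traceGram (orderBasis c₁ c₂)).det = -(c₁ * c₂) ^ 2 := by
  rw [Matrix.det_succ_row_zero]
  simp [Fin.sum_univ_succ, Matrix.det_fin_three, traceGram, trd, orderBasis, Fin.succAbove]
  ring

def orderStructConst (m l : ℤ) : Fin 4 → Fin 4 → Fin 4 → ℤ :=
  ![![![1, 0, 0, 0], ![0, 1, 0, 0], ![0, 0, 1, 0], ![0, 0, 0, 1]],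
    ![![0, 1, 0, 0], ![-(4 * m + 1), 0, 0, 0], ![-2 * m, 1, 0, 1],
      ![4 * m + 1, 2 * m, -(4 * m + 1), 0]],
    ![![0, 0, 1, 0], ![-(2 * m + 1), 0, 0, -1], ![-(m + l + 1), 0, 1, 0],
      ![2 * m + 1, m + l + 1, -(2 * m + 1), 1]],
    ![![0, 0, 0, 1], ![0, -(2 * m + 1), 4 * m + 1, 0], ![0, -(m + l + 1), 2 * m, 0],
      ![-(4 * m * l + 3 * m + l + 1), 0, 0, -1]]]

section multiplicationTable

variable {c₁ c₂ : ℚ} {m l : ℤ}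

theorem orderBasis_mul_orderBasis (hc₁ : c₁ = -(4 * m + 1)) (hc₂ : c₂ = -(4 * l + 2))
    (r s : Fin 4) :
    orderBasis c₁ c₂ r * orderBasis c₁ c₂ s =
      ∑ t, orderStructConst m l r s t • orderBasis c₁ c₂ t := by
  fin_cases r <;> fin_cases s <;> ext <;>
    simp [orderBasis, orderStructConst, Fin.sum_univ_four, hc₁, hc₂,
      ← Int.cast_smul_eq_zsmul ℚ] <;> ring

theorem orderBasis_mul_mem_quadSpan (hc₁ : c₁ = -(4 * m + 1)) (hc₂ : c₂ = -(4 * l + 2))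
    (r s : Fin 4) :
    orderBasis c₁ c₂ r * orderBasis c₁ c₂ s ∈ quadSpan (orderBasis c₁ c₂) := by
  rw [orderBasis_mul_orderBasis hc₁ hc₂]
  exact sum_zsmul_mem_quadSpan _ _

end multiplicationTable

theorem stmt_9_general (p n : ℕ) (hp4 : p % 4 = 1) (hn4 : n % 4 = 2)
    (i j k : ℍ[ℚ, -(p : ℚ), -(n : ℚ)])
    (hi : i = ⟨0, 1, 0, 0⟩) (hj : j = ⟨0, 0, 1, 0⟩) (hk : k = ⟨0, 0, 0, 1⟩)
    (e : Fin 4 → ℍ[ℚ, -(p : ℚ), -(n : ℚ)])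
    (he : e = ![1, i, (2 : ℚ)⁻¹ • (1 + i + j), (2 : ℚ)⁻¹ • (-1 - i + k)]) :
    (1 : ℍ[ℚ, -(p : ℚ), -(n : ℚ)]) ∈ quadSpan e ∧
    j ∈ quadSpan e ∧
    (∀ x ∈ quadSpan e, ∀ y ∈ quadSpan e, x * y ∈ quadSpan e) ∧
    (traceGram e).det = -((n : ℚ) ^ 2 * (p : ℚ) ^ 2) := by
  have hp : -(p : ℚ) = -(4 * ((p / 4 : ℕ) : ℤ) + 1) := by
    rw [neg_inj]; exact_mod_cast (by omega : p = 4 * (p / 4) + 1)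
  have hn : -(n : ℚ) = -(4 * ((n / 4 : ℕ) : ℤ) + 2) := by
    rw [neg_inj]; exact_mod_cast (by omega : n = 4 * (n / 4) + 2)
  subst hi hj hk he
  refine ⟨mem_quadSpan _ 0, imJ_mem_quadSpan_orderBasis _ _,
    fun x hx y hy => mul_mem_quadSpan (orderBasis_mul_mem_quadSpan hp hn) hx hy, ?_⟩
  exact (det_traceGram_orderBasis _ _).trans (by ring)

/-- For positive integers `p ≡ 1 (mod 4)` and `n ≡ 2 (mod 4)`, in `ℍ[ℚ, −p, −n]` the
lattice spanned by `1, i, (1+i+j)/2, (−1−i+k)/2` contains `1` and `j`, is closed under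
multiplication, and its trace Gram matrix has determinant `−n²·p²`. -/
theorem stmt_9 (p n : ℕ) (hp : 0 < p) (hn : 0 < n) (hp4 : p % 4 = 1) (hn4 : n % 4 = 2)
    (i j k : ℍ[ℚ, -(p : ℚ), -(n : ℚ)])
    (hi : i = ⟨0, 1, 0, 0⟩) (hj : j = ⟨0, 0, 1, 0⟩) (hk : k = ⟨0, 0, 0, 1⟩)
    (e : Fin 4 → ℍ[ℚ, -(p : ℚ), -(n : ℚ)])
    (he : e = ![1, i, (2 : ℚ)⁻¹ • (1 + i + j), (2 : ℚ)⁻¹ • (-1 - i + k)]) :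
    (1 : ℍ[ℚ, -(p : ℚ), -(n : ℚ)]) ∈ quadSpan e ∧
    j ∈ quadSpan e ∧
    (∀ x ∈ quadSpan e, ∀ y ∈ quadSpan e, x * y ∈ quadSpan e) ∧
    (traceGram e).det = -((n : ℚ) ^ 2 * (p : ℚ) ^ 2) :=
  stmt_9_general p n hp4 hn4 i j k hi hj hk e he
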